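/- Define on GV₄ = {0, 1/3, 2/3, 1} the operation x →_{4Ł} y = max(∼x, max(min(δ(∼x ⇒_G x), min(∼δ(x), min(¬_G ¬_G y, x))), x ⇒_G y)), where ∼x = 1 - x, ⇒_G is Gödel implication, ¬_G x = x ⇒_G 0, and δ(x) = ¬_G(∼x). Then for all x, y ∈ GV₄, x →_{4Ł} y = min(1, 1 - x + y), i.e. it coincides with 4-valued Łukasiewicz implication. -/

import Mathlib

/-!
Above the diagonal both sides are `1`. Below it, `δ` and `¬_G ¬_G` are crisp, so the correction term
`min (δ (∼x ⇒_G x)) (min (∼δ x) (min (¬_G ¬_G y) x))` equals `x` when `1/2 ≤ x < 1` and `y > 0`, and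
`0` otherwise. Hence `x →_{4Ł} y` is `1 - x` for `y = 0`, `y` for `x = 1`, and `x` in the remaining
case `x = 2/3, y = 1/3`; these are exactly the Łukasiewicz values.
-/

noncomputable def Gimp (x y : ℝ) : ℝ := if x ≤ y then 1 else y

noncomputable def Gneg (x : ℝ) : ℝ := Gimp x 0

noncomputable def delta (x : ℝ) : ℝ := Gneg (1 - x)

def GV4 : Set ℝ := {0, 1/3, 2/3, 1}

theorem Gimp_of_le {x y : ℝ} (h : x ≤ y) : Gimp x y = 1 := if_pos h

theorem Gimp_of_lt {x y : ℝ} (h : y < x) : Gimp x y = y := if_neg h.not_ge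

theorem Gneg_of_nonpos {x : ℝ} (h : x ≤ 0) : Gneg x = 1 := Gimp_of_le h

theorem Gneg_of_pos {x : ℝ} (h : 0 < x) : Gneg x = 0 := Gimp_of_lt h

theorem Gneg_mem_Icc (x : ℝ) : Gneg x ∈ Set.Icc (0 : ℝ) 1 := by
  rcases le_or_gt x 0 with h | h
  · simp [Gneg_of_nonpos h]
  · simp [Gneg_of_pos h]

theorem delta_mem_Icc (x : ℝ) : delta x ∈ Set.Icc (0 : ℝ) 1 := Gneg_mem_Icc _

theorem Gneg_Gneg_zero : Gneg (Gneg 0) = 0 := by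
  rw [Gneg_of_nonpos le_rfl, Gneg_of_pos one_pos]

theorem Gneg_Gneg_of_pos {y : ℝ} (h : 0 < y) : Gneg (Gneg y) = 1 := by
  rw [Gneg_of_pos h, Gneg_of_nonpos le_rfl]

theorem delta_of_one_le {x : ℝ} (h : 1 ≤ x) : delta x = 1 := Gneg_of_nonpos (by linarith)

theorem delta_of_lt_one {x : ℝ} (h : x < 1) : delta x = 0 := Gneg_of_pos (by linarith)

theorem GV4_subset_Icc : GV4 ⊆ Set.Icc 0 1 := by
  rintro z (rfl | rfl | rfl | rfl) <;> norm_num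

/-- `x →_{4Ł} y`. -/
noncomputable def fourLukImp (x y : ℝ) : ℝ :=
  max (1 - x)
    (max (min (delta (Gimp (1 - x) x)) (min (1 - delta x) (min (Gneg (Gneg y)) x)))
      (Gimp x y))

theorem fourLukImp_of_le {x y : ℝ} (hx0 : 0 ≤ x) (hx1 : x ≤ 1) (h : x ≤ y) :
    fourLukImp x y = 1 := by
  have hcorr : min (delta (Gimp (1 - x) x)) (min (1 - delta x) (min (Gneg (Gneg y)) x)) ≤ 1 :=
    (min_le_right _ _).trans <| (min_le_right _ _).trans <| (min_le_right _ _).trans hx1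
  rw [fourLukImp, Gimp_of_le h, max_eq_right hcorr, max_eq_right (by linarith)]

theorem fourLukImp_zero_right {x : ℝ} (hx0 : 0 < x) (hx1 : x ≤ 1) :
    fourLukImp x 0 = 1 - x := by
  obtain ⟨hd0, -⟩ := delta_mem_Icc (Gimp (1 - x) x)
  obtain ⟨-, hδ1⟩ := delta_mem_Icc x
  have hcorr : min (delta (Gimp (1 - x) x)) (min (1 - delta x) (min (Gneg (Gneg 0)) x)) = 0 := by
    rw [Gneg_Gneg_zero, min_eq_left hx0.le, min_eq_right (sub_nonneg.2 hδ1),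
      min_eq_right hd0]
  rw [fourLukImp, hcorr, Gimp_of_lt hx0, max_self, max_eq_left (by linarith)]

theorem fourLukImp_one_left {y : ℝ} (hy0 : 0 ≤ y) (hy1 : y < 1) : fourLukImp 1 y = y := by
  have hcorr : min (delta (Gimp (1 - 1) 1)) (min (1 - delta 1) (min (Gneg (Gneg y)) 1)) ≤ 0 := by
    rw [delta_of_one_le le_rfl, sub_self]
    exact (min_le_right _ _).trans (min_le_left _ _)
  rw [fourLukImp, Gimp_of_lt hy1, max_eq_right (hcorr.trans hy0), sub_self, max_eq_right hy0]

theorem fourLukImp_eq_self_of_half_le {x y : ℝ} (hx : 1 / 2 ≤ x) (hx1 : x < 1) (hy0 : 0 < y)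
    (hyx : y < x) : fourLukImp x y = x := by
  rw [fourLukImp, Gimp_of_le (by linarith : 1 - x ≤ x), delta_of_one_le le_rfl,
    delta_of_lt_one hx1, Gneg_Gneg_of_pos hy0, sub_zero, min_eq_right hx1.le, min_eq_right hx1.le,
    min_eq_right hx1.le, Gimp_of_lt hyx, max_eq_left hyx.le, max_eq_right (by linarith)]

theorem four_luk_implication :
    ∀ x ∈ GV4, ∀ y ∈ GV4,
      max (1 - x)
        (max (min (delta (Gimp (1 - x) x))
                  (min (1 - delta x) (min (Gneg (Gneg y)) x)))
             (Gimp x y))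
      = min 1 (1 - x + y) := by
  intro x hx y hy
  obtain ⟨hx0, hx1⟩ := GV4_subset_Icc hx
  obtain ⟨hy0, -⟩ := GV4_subset_Icc hy
  change fourLukImp x y = _
  rcases le_or_gt x y with hxy | hyx
  · rw [fourLukImp_of_le hx0 hx1 hxy, min_eq_left (by linarith)]
  rcases hy0.eq_or_lt with rfl | hy0
  · rw [fourLukImp_zero_right hyx hx1, min_eq_right (by linarith)]; ring
  rcases hx1.eq_or_lt with rfl | hx1
  · rw [fourLukImp_one_left hy0.le hyx, min_eq_right (by linarith)]; ring
  obtain ⟨rfl, rfl⟩ : x = 2 / 3 ∧ y = 1 / 3 := by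
    rcases hx with rfl | rfl | rfl | rfl <;> rcases hy with rfl | rfl | rfl | rfl <;>
      norm_num <;> linarith
  rw [fourLukImp_eq_self_of_half_le (by norm_num) hx1 hy0 hyx]
  norm_num
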